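/- arXiv:1610.02866 — 5 statements merged into one kernel-verified Lean document; each statement's English description precedes it below -/
import Mathlib

section
/- If (X_n) and (Y_n) are two independent Galton-Watson processes with the same reproduction law ν (and initial laws μ₁, μ₂ respectively), then (X_n + Y_n) is a Galton-Watson process with reproduction law ν and initial law μ₁ * μ₂ (the convolution). -/
/-!
Realise the sum on the same probability space: `Z n = Y1 n + Y2 n`, and the offspring variables
of generation `n` of `Z` are those of the first process for its `Y1 n` individuals, followed by
those of the second one. The branching recursion for `Z` is then a sum splitting. Since the split
point `Y1 n` is determined by the generations before `n`, while the offspring variables of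
generation `n` are i.i.d. with law `ν` and independent of those generations, relabeling them
injectively by a function of the past keeps them i.i.d. with law `ν` and independent of the past.
Induction over the generations makes all the new offspring variables i.i.d. and independent of
`Z 0 = Y1 0 + Y2 0`, whose law is `μ₁ * μ₂` by independence of `Y1 0` and `Y2 0`.
-/

open MeasureTheory ProbabilityTheory Filter ENNReal
noncomputable section

/-- A Galton–Watson process with random initial value `Y 0` of law `μ0`,
independent of the i.i.d. reproduction variables `X n i` of law `ν`. -/
def IsGW0 {Ω : Type} [MeasurableSpace Ω] (P : Measure Ω) (ν μ0 : Measure ℕ)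
    (X : ℕ → ℕ → Ω → ℕ) (Y : ℕ → Ω → ℕ) : Prop :=
  Measurable (Y 0) ∧ (∀ n i, Measurable (X n i)) ∧
  iIndepFun
    (fun o : Option (ℕ × ℕ) => o.elim (Y 0) (fun p => X p.1 p.2)) P ∧
  (∀ n i, Measure.map (X n i) P = ν) ∧
  Measure.map (Y 0) P = μ0 ∧
  ∀ n ω, Y (n + 1) ω = ∑ i ∈ Finset.range (Y n ω), X n i ω

section General

variable {Ω β γ : Type*} [MeasurableSpace β] [MeasurableSpace γ] [Countable γ]
  [MeasurableSingletonClass γ]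

theorem measurable_apply_of_countable {m : MeasurableSpace Ω} {F : γ → Ω → β}
    (hF : ∀ c, Measurable (F c)) {g : Ω → γ} (hg : Measurable g) :
    Measurable fun ω => F (g ω) ω :=
  (measurable_from_prod_countable_left (f := fun p : Ω × γ => F p.2 p.1) hF).comp
    (measurable_id.prodMk hg)

theorem measure_eq_tsum_inter_preimage_singleton {m : MeasurableSpace Ω} (μ : Measure Ω)
    {g : Ω → γ} (hg : Measurable g) (S : Set Ω) :
    μ S = ∑' c, μ (S ∩ g ⁻¹' {c}) := by
  have hfib : ∀ c, MeasurableSet (g ⁻¹' {c}) := fun c => hg (measurableSet_singleton c)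
  calc μ S = μ.restrict S (⋃ c, g ⁻¹' {c}) := by
        rw [← Set.preimage_iUnion, Set.iUnion_of_singleton, Set.preimage_univ,
          Measure.restrict_apply_univ]
    _ = ∑' c, μ (S ∩ g ⁻¹' {c}) := by
        rw [measure_iUnion (pairwise_disjoint_fiber g) hfib]
        simp_rw [Measure.restrict_apply (hfib _), Set.inter_comm]

end General

section Relabel

variable {Ω β γ ι κ : Type*} {m mΩ : MeasurableSpace Ω} [mβ : MeasurableSpace β]
  [MeasurableSpace γ] [Countable γ] [MeasurableSingletonClass γ]
  {P : Measure Ω} {ν : Measure β}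

def relabel (V : κ → Ω → β) (idx : γ → ι → κ) (g : Ω → γ) : ι → Ω → β :=
  fun i ω => V (idx (g ω) i) ω

theorem measure_inter_biInter_relabel_preimage (hm : m ≤ mΩ)
    {V : κ → Ω → β} (hV : ∀ k, Measurable (V k)) (hV_indep : iIndepFun V P)
    (hV_law : ∀ k, P.map (V k) = ν) (hmV : Indep m (⨆ k, mβ.comap (V k)) P)
    {g : Ω → γ} (hg : Measurable[m] g) {idx : γ → ι → κ} (hidx : ∀ c, (idx c).Injective)
    {E : Set Ω} (hE : MeasurableSet[m] E) (I : Finset ι) {B : ι → Set β}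
    (hB : ∀ i, MeasurableSet (B i)) :
    P (E ∩ ⋂ i ∈ I, relabel V idx g i ⁻¹' B i) = P E * ∏ i ∈ I, ν (B i) := by
  have hgm : Measurable g := hg.mono hm le_rfl
  have hfiber : ∀ c, (E ∩ ⋂ i ∈ I, relabel V idx g i ⁻¹' B i) ∩ g ⁻¹' {c} =
      (E ∩ g ⁻¹' {c}) ∩ ⋂ i ∈ I, V (idx c i) ⁻¹' B i := by
    intro c
    ext ω
    simp only [Set.mem_inter_iff, Set.mem_iInter, Set.mem_preimage, Set.mem_singleton_iff,
      relabel]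
    constructor
    · rintro ⟨⟨hE, hB⟩, rfl⟩
      exact ⟨⟨hE, rfl⟩, hB⟩
    · rintro ⟨⟨hE, rfl⟩, hB⟩
      exact ⟨⟨hE, hB⟩, rfl⟩
  have hlevel : ∀ c, P (⋂ i ∈ I, V (idx c i) ⁻¹' B i) = ∏ i ∈ I, ν (B i) := by
    intro c
    rw [(hV_indep.precomp (hidx c)).measure_inter_preimage_eq_mul I (fun i _ => hB i)]
    refine Finset.prod_congr rfl fun i _ => ?_
    rw [← hV_law (idx c i), Measure.map_apply (hV _) (hB i)]
  have hfuture : ∀ c, MeasurableSet[⨆ k, mβ.comap (V k)] (⋂ i ∈ I, V (idx c i) ⁻¹' B i) :=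
    fun c => Finset.measurableSet_biInter I fun i _ =>
      (le_iSup (fun k => mβ.comap (V k)) (idx c i)) _ ⟨B i, hB i, rfl⟩
  calc P (E ∩ ⋂ i ∈ I, relabel V idx g i ⁻¹' B i)
      = ∑' c, P (E ∩ g ⁻¹' {c}) * ∏ i ∈ I, ν (B i) := by
        rw [measure_eq_tsum_inter_preimage_singleton P hgm]
        refine tsum_congr fun c => ?_
        rw [hfiber, (Indep_iff _ _ P).1 hmV _ _ (hE.inter (hg (measurableSet_singleton c)))
          (hfuture c), hlevel]
    _ = P E * ∏ i ∈ I, ν (B i) := by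
        rw [ENNReal.tsum_mul_right, ← measure_eq_tsum_inter_preimage_singleton P hgm]

end Relabel

theorem Finset.image_mk_image_snd_eq_self {α ι : Type*} [DecidableEq α] [DecidableEq ι]
    {S : Finset (α × ι)} {a : α} (h : ∀ p ∈ S, p.1 = a) :
    (S.image Prod.snd).image (Prod.mk a) = S := by
  rw [Finset.image_image]
  conv_rhs => rw [← Finset.image_id (s := S)]
  exact Finset.image_congr fun p hp => Prod.ext (h p hp).symm rfl

section AdaptedRelabel

variable {Ω β γ ι κ : Type*} {mΩ : MeasurableSpace Ω} [mβ : MeasurableSpace β]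
  [MeasurableSpace γ] [Countable γ] [MeasurableSingletonClass γ]
  {P : Measure Ω} {ν : Measure β}
  {𝓕 : Filtration ℕ mΩ} {V : ℕ → κ → Ω → β} {g : ℕ → Ω → γ} {idx : γ → ι → κ}

theorem measurable_relabel_succ (hV : ∀ n k, Measurable[𝓕 (n + 1)] (V n k))
    (hg : ∀ n, Measurable[𝓕 n] (g n)) (n : ℕ) (i : ι) :
    Measurable[𝓕 (n + 1)] (relabel (V n) idx (g n) i) :=
  measurable_apply_of_countable (m := 𝓕 (n + 1)) (fun c => hV n (idx c i))
    ((hg n).mono (𝓕.mono n.le_succ) le_rfl)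

theorem measure_inter_biInter_relabel_preimage_of_adapted
    (hV : ∀ n k, Measurable[𝓕 (n + 1)] (V n k)) (hV_indep : ∀ n, iIndepFun (V n) P)
    (hV_law : ∀ n k, P.map (V n k) = ν) (h𝓕V : ∀ n, Indep (𝓕 n) (⨆ k, mβ.comap (V n k)) P)
    (hg : ∀ n, Measurable[𝓕 n] (g n)) (hidx : ∀ c, (idx c).Injective)
    {D : Set Ω} (hD : MeasurableSet[𝓕 0] D) (T : Finset (ℕ × ι)) {B : ℕ × ι → Set β}
    (hB : ∀ p, MeasurableSet (B p)) :
    P (D ∩ ⋂ p ∈ T, relabel (V p.1) idx (g p.1) p.2 ⁻¹' B p) = P D * ∏ p ∈ T, ν (B p) := by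
  classical
  suffices ∀ L (T : Finset (ℕ × ι)), (∀ p ∈ T, p.1 < L) →
      P (D ∩ ⋂ p ∈ T, relabel (V p.1) idx (g p.1) p.2 ⁻¹' B p) = P D * ∏ p ∈ T, ν (B p) from
    this (T.sup Prod.fst + 1) T fun p hp => Nat.lt_succ_of_le (Finset.le_sup (f := Prod.fst) hp)
  intro L
  induction L with
  | zero =>
    intro T hT
    simp [Finset.eq_empty_of_forall_notMem fun p hp => Nat.not_lt_zero _ (hT p hp)]
  | succ L ih =>
    intro T hT
    set R : ℕ × ι → Set Ω := fun p => relabel (V p.1) idx (g p.1) p.2 ⁻¹' B p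
    set S := T.filter fun p => ¬ p.1 < L
    set I := S.image Prod.snd
    have hS : I.image (Prod.mk L) = S := Finset.image_mk_image_snd_eq_self fun p hp => by
      obtain ⟨hpT, hpL⟩ := Finset.mem_filter.1 hp
      have := hT p hpT
      omega
    have hprod : ∏ p ∈ S, ν (B p) = ∏ i ∈ I, ν (B (L, i)) := by
      rw [← hS, Finset.prod_image fun _ _ _ _ h => Prod.mk_right_injective L h]
    have hsplit : ⋂ p ∈ T, R p = (⋂ p ∈ T.filter (·.1 < L), R p) ∩ ⋂ p ∈ S, R p := by
      ext ω
      simp only [S, Set.mem_inter_iff, Set.mem_iInter, Finset.mem_filter]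
      grind
    have hpast : MeasurableSet[𝓕 L] (D ∩ ⋂ p ∈ T.filter (·.1 < L), R p) :=
      (𝓕.mono L.zero_le _ hD).inter <| Finset.measurableSet_biInter _ fun p hp =>
        ((measurable_relabel_succ hV hg p.1 p.2).mono
          (𝓕.mono (Finset.mem_filter.1 hp).2) le_rfl) (hB p)
    calc P (D ∩ ⋂ p ∈ T, R p)
        = P ((D ∩ ⋂ p ∈ T.filter (·.1 < L), R p) ∩
            ⋂ i ∈ I, relabel (V L) idx (g L) i ⁻¹' B (L, i)) := by
          rw [hsplit, ← Set.inter_assoc, ← hS, Finset.set_biInter_finset_image]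
      _ = P (D ∩ ⋂ p ∈ T.filter (·.1 < L), R p) * ∏ i ∈ I, ν (B (L, i)) :=
          measure_inter_biInter_relabel_preimage (𝓕.le L) (fun k => (hV L k).mono (𝓕.le _) le_rfl)
            (hV_indep L) (hV_law L) (h𝓕V L) (hg L) hidx hpast _ fun i => hB _
      _ = P D * ∏ p ∈ T, ν (B p) := by
          rw [ih _ fun p hp => (Finset.mem_filter.1 hp).2, mul_assoc, ← hprod,
            Finset.prod_filter_mul_prod_filter_not]

end AdaptedRelabel

section OptionFamily

variable {Ω β ι : Type*} {mΩ : MeasurableSpace Ω} [MeasurableSpace β] {P : Measure Ω}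
  [IsProbabilityMeasure P]

theorem iIndepFun_option_of_measure_inter {f : Option ι → Ω → β}
    (h : ∀ (T : Finset ι) {A : Set β} {B : ι → Set β}, MeasurableSet A →
      (∀ i ∈ T, MeasurableSet (B i)) → P (f none ⁻¹' A ∩ ⋂ i ∈ T, f (some i) ⁻¹' B i) =
        P (f none ⁻¹' A) * ∏ i ∈ T, P (f (some i) ⁻¹' B i)) :
    iIndepFun f P := by
  classical
  rw [iIndepFun_iff_measure_inter_preimage_eq_mul]
  intro S sets hsets
  by_cases hS : none ∈ S
  · obtain ⟨T, rfl⟩ : ∃ T, S = Finset.insertNone T :=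
      ⟨S.eraseNone, by rw [Finset.insertNone_eraseNone, Finset.insert_eq_of_mem hS]⟩
    rw [Finset.prod_insertNone, ← h T (hsets none hS) fun i hi => hsets _ (by simpa using hi)]
    congr 1
    ext ω
    simp only [Set.mem_inter_iff, Set.mem_iInter, Set.mem_preimage, Finset.forall_mem_insertNone]
  · obtain ⟨T, rfl⟩ : ∃ T, S = T.map Function.Embedding.some :=
      ⟨S.eraseNone, by rw [Finset.map_some_eraseNone, Finset.erase_eq_of_notMem hS]⟩
    simpa using h T MeasurableSet.univ fun i hi => hsets _ (by simpa using hi)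

end OptionFamily

section Generations

variable {Ω β ι κ : Type*} {mΩ : MeasurableSpace Ω} [mβ : MeasurableSpace β]

/-- `some (n, i)` indexes the offspring number of individual `i` of generation `n`, which is known
once generation `n + 1` is; `none` indexes the initial value. -/
def generation : Option (ℕ × ι) → ℕ := fun o => o.elim 0 fun p => p.1 + 1

def generationFiltration (W : κ × Option (ℕ × ι) → Ω → β) (hW : ∀ q, Measurable (W q)) :
    Filtration ℕ mΩ where
  seq n := ⨆ (q) (_ : generation q.2 ≤ n), mβ.comap (W q)
  mono' n _ h := biSup_mono fun (q : κ × Option (ℕ × ι)) (hq : generation q.2 ≤ n) => hq.trans h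
  le' _ := iSup₂_le fun q _ => (hW q).comap_le

variable {W : κ × Option (ℕ × ι) → Ω → β} {hW : ∀ q, Measurable (W q)}

theorem measurable_generationFiltration {q : κ × Option (ℕ × ι)} {n : ℕ}
    (hq : generation q.2 ≤ n) : Measurable[generationFiltration W hW n] (W q) :=
  measurable_iff_comap_le.2 <|
    le_iSup₂ (f := fun q (_ : generation q.2 ≤ n) => mβ.comap (W q)) q hq

theorem indep_generationFiltration_offspring {P : Measure Ω} (hW_indep : iIndepFun W P) (n : ℕ) :
    Indep (generationFiltration W hW n) (⨆ k : κ × ι, mβ.comap (W (k.1, some (n, k.2)))) P := by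
  have := indep_iSup_of_disjoint (fun q => (hW q).comap_le) hW_indep.iIndep
    (S := {q | generation q.2 ≤ n}) (T := Set.range fun k : κ × ι => (k.1, some (n, k.2)))
    (Set.disjoint_left.2 fun q hq ⟨k, hk⟩ => by subst hk; simp [generation] at hq)
  rwa [iSup_range] at this

end Generations

theorem measurable_generationFiltration_of_sum_range {Ω κ : Type*} {mΩ : MeasurableSpace Ω}
    {W : κ × Option (ℕ × ℕ) → Ω → ℕ}
    {hW : ∀ q, Measurable (W q)} {k : κ} {Y : ℕ → Ω → ℕ} (h0 : Y 0 = W (k, none))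
    (hrec : ∀ n ω, Y (n + 1) ω = ∑ i ∈ Finset.range (Y n ω), W (k, some (n, i)) ω) (n : ℕ) :
    Measurable[generationFiltration W hW n] (Y n) := by
  induction n with
  | zero => exact h0 ▸ measurable_generationFiltration le_rfl
  | succ n ih =>
    rw [funext (hrec n)]
    exact measurable_apply_of_countable (m := generationFiltration W hW (n + 1))
      (F := fun j ω => ∑ i ∈ Finset.range j, W (k, some (n, i)) ω)
      (fun j => Finset.measurable_sum _ fun i _ => measurable_generationFiltration le_rfl)
      (ih.mono ((generationFiltration W hW).mono n.le_succ) le_rfl)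

def interleaveIdx (a i : ℕ) : Bool × ℕ := if i < a then (true, i) else (false, i - a)

theorem interleaveIdx_injective (a : ℕ) : (interleaveIdx a).Injective := by
  intro i j h
  unfold interleaveIdx at h
  split_ifs at h <;> grind

theorem sum_range_interleaveIdx {M : Type*} [AddCommMonoid M] (f : Bool × ℕ → M) (a b : ℕ) :
    ∑ i ∈ Finset.range (a + b), f (interleaveIdx a i) =
      ∑ i ∈ Finset.range a, f (true, i) + ∑ i ∈ Finset.range b, f (false, i) := by
  rw [Finset.sum_range_add]
  congr 1
  · exact Finset.sum_congr rfl fun i hi => by rw [interleaveIdx, if_pos (Finset.mem_range.1 hi)]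
  · exact Finset.sum_congr rfl fun i _ => by simp [interleaveIdx]

theorem isGW0_of_measure_inter_biInter {Ω : Type} {m mΩ : MeasurableSpace Ω} {P : Measure Ω}
    [IsProbabilityMeasure P] {ν μ0 : Measure ℕ} {X : ℕ → ℕ → Ω → ℕ} {Y : ℕ → Ω → ℕ}
    (hm : m ≤ mΩ) (hY : Measurable[m] (Y 0)) (hX : ∀ n i, Measurable (X n i))
    (hXm : ∀ D, MeasurableSet[m] D → ∀ (T : Finset (ℕ × ℕ)) (B : ℕ × ℕ → Set ℕ),
      P (D ∩ ⋂ p ∈ T, X p.1 p.2 ⁻¹' B p) = P D * ∏ p ∈ T, ν (B p))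
    (hY_law : P.map (Y 0) = μ0)
    (hrec : ∀ n ω, Y (n + 1) ω = ∑ i ∈ Finset.range (Y n ω), X n i ω) :
    IsGW0 P ν μ0 X Y := by
  have hX_law : ∀ n i B, P (X n i ⁻¹' B) = ν B := fun n i B => by
    simpa using hXm Set.univ MeasurableSet.univ {(n, i)} fun _ => B
  refine ⟨hY.mono hm le_rfl, hX, iIndepFun_option_of_measure_inter fun T A B hA _ => ?_,
    fun n i => Measure.ext fun B hB => by rw [Measure.map_apply (hX n i) hB, hX_law], hY_law, hrec⟩
  exact (hXm _ (hY hA) T B).trans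
    (congrArg _ (Finset.prod_congr rfl fun p _ => (hX_law p.1 p.2 (B p)).symm))

theorem isGW0_add_of_iIndepFun {Ω : Type} [MeasurableSpace Ω] {P : Measure Ω}
    [IsProbabilityMeasure P] {ν : Measure ℕ} {W : Bool × Option (ℕ × ℕ) → Ω → ℕ}
    (hW : ∀ q, Measurable (W q)) (hW_indep : iIndepFun W P)
    (hW_law : ∀ b n i, P.map (W (b, some (n, i))) = ν) {Y1 Y2 : ℕ → Ω → ℕ}
    (hY1 : Y1 0 = W (true, none)) (hY2 : Y2 0 = W (false, none))
    (hrec1 : ∀ n ω, Y1 (n + 1) ω = ∑ i ∈ Finset.range (Y1 n ω), W (true, some (n, i)) ω)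
    (hrec2 : ∀ n ω, Y2 (n + 1) ω = ∑ i ∈ Finset.range (Y2 n ω), W (false, some (n, i)) ω) :
    IsGW0 P ν (P.map (Y1 0) ∗ P.map (Y2 0))
      (fun n => relabel (fun k : Bool × ℕ => W (k.1, some (n, k.2))) interleaveIdx (Y1 n))
      (fun n ω => Y1 n ω + Y2 n ω) := by
  let 𝓕 := generationFiltration W hW
  let V n (k : Bool × ℕ) := W (k.1, some (n, k.2))
  have hY1_adapted : ∀ n, Measurable[𝓕 n] (Y1 n) :=
    measurable_generationFiltration_of_sum_range hY1 hrec1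
  have hV : ∀ n k, Measurable[𝓕 (n + 1)] (V n k) := fun n k =>
    measurable_generationFiltration (q := (k.1, some (n, k.2))) le_rfl
  have hY12 : IndepFun (Y1 0) (Y2 0) P := hY1 ▸ hY2 ▸ hW_indep.indepFun (by simp)
  refine isGW0_of_measure_inter_biInter (m := 𝓕 0) (𝓕.le 0) ?_ ?_ ?_
    (hY12.map_add_eq_map_conv_map (hY1 ▸ hW _) (hY2 ▸ hW _)) ?_
  · exact (hY1_adapted 0).add (measurable_generationFiltration_of_sum_range hY2 hrec2 0)
  · exact fun n i => (measurable_relabel_succ hV hY1_adapted n i).mono (𝓕.le _) le_rfl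
  · exact fun D hD T B => measure_inter_biInter_relabel_preimage_of_adapted hV
      (fun n => hW_indep.precomp fun k k' h => by simpa [Prod.ext_iff] using h)
      (fun n k => hW_law k.1 n k.2) (indep_generationFiltration_offspring hW_indep) hY1_adapted
      interleaveIdx_injective hD T fun _ => .of_discrete
  · intro n ω
    rw [hrec1, hrec2]
    exact (sum_range_interleaveIdx (fun k => V n k ω) _ _).symm

theorem stmt2_general {Ω : Type} [MeasurableSpace Ω] (P : Measure Ω) [IsProbabilityMeasure P]
    (ν μ1 μ2 : Measure ℕ)
    (X1 X2 : ℕ → ℕ → Ω → ℕ) (Y1 Y2 : ℕ → Ω → ℕ)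
    (h1 : IsGW0 P ν μ1 X1 Y1) (h2 : IsGW0 P ν μ2 X2 Y2)
    (hindep : iIndepFun
      (fun b : Bool => fun ω => fun o : Option (ℕ × ℕ) =>
        if b then (o.elim (Y1 0) fun p => X1 p.1 p.2) ω
        else (o.elim (Y2 0) fun p => X2 p.1 p.2) ω) P) :
    ∃ (Ω' : Type) (_ : MeasurableSpace Ω') (P' : Measure Ω')
      (_ : IsProbabilityMeasure P') (X' : ℕ → ℕ → Ω' → ℕ) (Z : ℕ → Ω' → ℕ),
      IsGW0 P' ν (Measure.map (fun p : ℕ × ℕ => p.1 + p.2) (μ1.prod μ2)) X' Z ∧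
      Measure.map (fun ω (n : ℕ) => Y1 n ω + Y2 n ω) P
        = Measure.map (fun ω (n : ℕ) => Z n ω) P' := by
  obtain ⟨hY1, hX1, hI1, hX1_law, hY1_law, hrec1⟩ := h1
  obtain ⟨hY2, hX2, hI2, hX2_law, hY2_law, hrec2⟩ := h2
  let W : Bool × Option (ℕ × ℕ) → Ω → ℕ := fun q ω =>
    if q.1 then (q.2.elim (Y1 0) fun p => X1 p.1 p.2) ω
    else (q.2.elim (Y2 0) fun p => X2 p.1 p.2) ω
  have hW : ∀ q, Measurable (W q) := by
    rintro ⟨_ | _, _ | p⟩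
    exacts [hY2, hX2 _ _, hY1, hX1 _ _]
  have hW_indep : iIndepFun W P :=
    iIndepFun_uncurry' (X := fun b o => W (b, o)) (fun b o => hW (b, o)) hindep
      (Bool.forall_bool.2 ⟨hI2, hI1⟩)
  have hW_law : ∀ b n i, P.map (W (b, some (n, i))) = ν := by
    rintro (_ | _) n i
    exacts [hX2_law n i, hX1_law n i]
  have hGW := isGW0_add_of_iIndepFun hW hW_indep hW_law rfl rfl hrec1 hrec2
  rw [hY1_law, hY2_law] at hGW
  exact ⟨Ω, inferInstance, P, inferInstance, _, _, hGW, rfl⟩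

/-- The sum of two independent Galton–Watson processes with the same reproduction
law ν is a Galton–Watson process with reproduction law ν and initial law μ₁ * μ₂. -/
theorem stmt2 {Ω : Type} [MeasurableSpace Ω] (P : Measure Ω) [IsProbabilityMeasure P]
    (ν μ1 μ2 : Measure ℕ) [IsProbabilityMeasure ν] [IsProbabilityMeasure μ1]
    [IsProbabilityMeasure μ2]
    (X1 X2 : ℕ → ℕ → Ω → ℕ) (Y1 Y2 : ℕ → Ω → ℕ)
    (h1 : IsGW0 P ν μ1 X1 Y1) (h2 : IsGW0 P ν μ2 X2 Y2)
    (hindep : iIndepFun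
      (fun b : Bool => fun ω => fun o : Option (ℕ × ℕ) =>
        if b then (o.elim (Y1 0) fun p => X1 p.1 p.2) ω
        else (o.elim (Y2 0) fun p => X2 p.1 p.2) ω) P) :
    ∃ (Ω' : Type) (_ : MeasurableSpace Ω') (P' : Measure Ω')
      (_ : IsProbabilityMeasure P') (X' : ℕ → ℕ → Ω' → ℕ) (Z : ℕ → Ω' → ℕ),
      IsGW0 P' ν (Measure.map (fun p : ℕ × ℕ => p.1 + p.2) (μ1.prod μ2)) X' Z ∧
      Measure.map (fun ω (n : ℕ) => Y1 n ω + Y2 n ω) P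
        = Measure.map (fun ω (n : ℕ) => Z n ω) P' :=
  stmt2_general P ν μ1 μ2 X1 X2 Y1 Y2 h1 h2 hindep
end
end

section
/- Let (Y_n) be a Galton-Watson process with reproduction law ν. Suppose there exist integers N ≥ 1 and a ≥ 1 such that a · P^N(Y_1 ≥ a·N) > 1. Then P^1(τ = ∞) > 0. -/
/-!
By Markov's inequality, `a·N·P^N(Y₁ ≥ aN) ≤ E^N[Y₁] = N·m`, so the hypothesis forces the mean `m`
of `ν` to exceed `1`. By monotone convergence the offspring truncated at a large level `B` still
have mean `m_B > 1`, and now a finite second moment `m₂`; the Galton–Watson process `Z` built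
from the truncated offspring is dominated by `Y`. Conditioning on the first `n` generations gives
`E Z_{n+1} = m_B E Z_n` and `E Z_{n+1}² ≤ m_B² E Z_n² + m₂ E Z_n`, hence
`E Z_n² ≤ K (E Z_n)²` with `K = 1 + m₂ / (1 - 1/m_B)` independent of `n`. The second moment
method (Cauchy–Schwarz) gives `P(Z_n ≠ 0) ≥ (E Z_n)² / E Z_n² ≥ 1/K`, and by continuity from
above `Z`, hence `Y`, survives with probability at least `1/K`.
-/

open MeasureTheory ProbabilityTheory Filter ENNReal
noncomputable section

/-- A Galton–Watson process: `X n i` are i.i.d. with law `ν`, and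
`Y (n+1) = ∑_{i < Y n} X n i`. -/
def IsGW {Ω : Type} [MeasurableSpace Ω] (P : Measure Ω) (ν : Measure ℕ)
    (X : ℕ → ℕ → Ω → ℕ) (Y : ℕ → Ω → ℕ) : Prop :=
  (∀ n i, Measurable (X n i)) ∧
  iIndepFun (fun p : ℕ × ℕ => X p.1 p.2) P ∧
  (∀ n i, Measure.map (X n i) P = ν) ∧
  ∀ n ω, Y (n + 1) ω = ∑ i ∈ Finset.range (Y n ω), X n i ω

theorem Measurable.ennreal_natCast {α : Type*} {m : MeasurableSpace α} {f : α → ℕ}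
    (hf : Measurable f) : Measurable fun a => (f a : ℝ≥0∞) :=
  (measurable_of_countable _).comp hf

theorem tsum_sq_eq_tsum_tsum_mul {ι : Type*} (a : ι → ℝ≥0∞) : (∑' i, a i) ^ 2 = ∑' i, ∑' j, a i * a j := by
  rw [sq, ← ENNReal.tsum_mul_right]
  exact tsum_congr fun i => ENNReal.tsum_mul_left.symm

theorem le_of_le_mul_sq_add {a : ℕ → ℝ≥0∞} {m c : ℝ≥0∞} (hm : 1 < m) (hm' : m ≠ ⊤)
    (h0 : a 0 ≤ 1) (h : ∀ n, a (n + 1) ≤ a n * m ^ 2 + c * m ^ n) (n : ℕ) :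
    a n ≤ (1 + c * (1 - m⁻¹)⁻¹) * (m ^ n) ^ 2 := by
  have hm0 : m ≠ 0 := (zero_lt_one.trans hm).ne'
  have partial_sum : ∀ n, a n ≤ (1 + c * ∑ j ∈ Finset.range n, m⁻¹ ^ (j + 2)) * (m ^ n) ^ 2 := by
    intro n
    induction n with
    | zero => simpa using h0
    | succ n ih =>
      have hpow : m⁻¹ ^ (n + 2) * (m ^ (n + 1)) ^ 2 = m ^ n := by
        rw [← ENNReal.inv_pow, show (m ^ (n + 1)) ^ 2 = m ^ (n + 2) * m ^ n by ring, ← mul_assoc,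
          ENNReal.inv_mul_cancel (pow_ne_zero _ hm0) (pow_ne_top hm'), one_mul]
      calc a (n + 1) ≤ a n * m ^ 2 + c * m ^ n := h n
        _ ≤ (1 + c * ∑ j ∈ Finset.range n, m⁻¹ ^ (j + 2)) * (m ^ n) ^ 2 * m ^ 2
            + c * (m⁻¹ ^ (n + 2) * (m ^ (n + 1)) ^ 2) := by rw [hpow]; gcongr
        _ = _ := by rw [Finset.sum_range_succ]; ring
  refine (partial_sum n).trans ?_
  gcongr
  calc ∑ j ∈ Finset.range n, m⁻¹ ^ (j + 2)
      ≤ ∑ j ∈ Finset.range n, m⁻¹ ^ j :=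
        Finset.sum_le_sum fun j _ =>
          pow_le_pow_right_of_le_one' (ENNReal.inv_le_one.2 hm.le) (by omega)
    _ ≤ ∑' j, m⁻¹ ^ j := ENNReal.sum_le_tsum _
    _ = (1 - m⁻¹)⁻¹ := ENNReal.tsum_geometric _

section SecondMomentMethod

variable {Ω : Type} [MeasurableSpace Ω] {μ : Measure Ω} {Z : Ω → ℝ≥0∞}

theorem sq_lintegral_le_lintegral_sq_mul_measure_ne_zero (hZ : Measurable Z) :
    (∫⁻ ω, Z ω ∂μ) ^ 2 ≤ (∫⁻ ω, Z ω ^ 2 ∂μ) * μ {ω | Z ω ≠ 0} := by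
  set A := {ω | Z ω ≠ 0}
  have hA : MeasurableSet A := hZ (measurableSet_singleton 0).compl
  have hZA : Z = Z * A.indicator 1 := by
    funext ω
    by_cases h : Z ω = 0 <;> simp [A, h]
  have hAsq : ∫⁻ ω, A.indicator 1 ω ^ (2 : ℝ) ∂μ = μ A := by
    rw [← lintegral_indicator_one hA]
    congr 1; funext ω
    by_cases h : ω ∈ A <;> simp [h]
  have holder := ENNReal.lintegral_mul_le_Lp_mul_Lq μ Real.HolderConjugate.two_two
    hZ.aemeasurable (measurable_one.indicator hA).aemeasurable
  rw [← hZA, hAsq] at holder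
  calc (∫⁻ ω, Z ω ∂μ) ^ 2
      ≤ ((∫⁻ ω, Z ω ^ (2 : ℝ) ∂μ) ^ (1 / 2 : ℝ) * μ A ^ (1 / 2 : ℝ)) ^ 2 := by gcongr
    _ = (∫⁻ ω, Z ω ^ 2 ∂μ) * μ A := by
      rw [mul_pow, ← ENNReal.rpow_natCast, ← ENNReal.rpow_natCast (μ A ^ _), ← ENNReal.rpow_mul,
        ← ENNReal.rpow_mul]
      norm_num

theorem inv_le_measure_ne_zero_of_lintegral_sq_le (hZ : Measurable Z) {K : ℝ≥0∞}
    (h0 : ∫⁻ ω, Z ω ∂μ ≠ 0) (htop : ∫⁻ ω, Z ω ∂μ ≠ ⊤)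
    (h : ∫⁻ ω, Z ω ^ 2 ∂μ ≤ K * (∫⁻ ω, Z ω ∂μ) ^ 2) :
    K⁻¹ ≤ μ {ω | Z ω ≠ 0} := by
  set M := ∫⁻ ω, Z ω ∂μ
  have hM : M ^ 2 * 1 ≤ M ^ 2 * (K * μ {ω | Z ω ≠ 0}) :=
    calc M ^ 2 * 1 = M ^ 2 := mul_one _
      _ ≤ (∫⁻ ω, Z ω ^ 2 ∂μ) * μ {ω | Z ω ≠ 0} :=
        sq_lintegral_le_lintegral_sq_mul_measure_ne_zero hZ
      _ ≤ K * M ^ 2 * μ {ω | Z ω ≠ 0} := by gcongr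
      _ = M ^ 2 * (K * μ {ω | Z ω ≠ 0}) := by ring
  have hK : 1 ≤ K * μ {ω | Z ω ≠ 0} :=
    (ENNReal.mul_le_mul_iff_right (pow_ne_zero 2 h0) (pow_ne_top htop)).1 hM
  refine (ENNReal.inv_le_iff_le_mul (fun _ _ => ?_) (fun _ _ => ?_)).2 hK <;> simp_all

end SecondMomentMethod

theorem lintegral_natCast_le_lintegral_sq (ν : Measure ℕ) :
    ∫⁻ x, (x : ℝ≥0∞) ∂ν ≤ ∫⁻ x, (x : ℝ≥0∞) ^ 2 ∂ν :=
  lintegral_mono fun x => by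
    simpa using (Nat.cast_le (α := ℝ≥0∞)).2 (Nat.le_self_pow two_ne_zero x)

theorem exists_lt_lintegral_min {ν : Measure ℕ} {c : ℝ≥0∞} (h : c < ∫⁻ x, (x : ℝ≥0∞) ∂ν) :
    ∃ B : ℕ, c < ∫⁻ x, (min x B : ℕ) ∂ν := by
  have hsup : ∫⁻ x, (x : ℝ≥0∞) ∂ν = ⨆ B : ℕ, ∫⁻ x, (min x B : ℕ) ∂ν := by
    rw [← lintegral_iSup (fun B => measurable_of_countable _)
      fun B B' hB x => Nat.cast_le.2 (min_le_min_left x hB)]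
    congr 1; funext x
    exact le_antisymm (le_iSup_of_le x (by simp)) (iSup_le fun B => Nat.cast_le.2 (min_le_left _ _))
  exact lt_iSup_iff.1 (hsup ▸ h)

theorem lintegral_sq_map_min_le (ν : Measure ℕ) [IsProbabilityMeasure ν] (B : ℕ) :
    ∫⁻ y, (y : ℝ≥0∞) ^ 2 ∂(ν.map (min · B)) ≤ (B : ℝ≥0∞) ^ 2 := by
  rw [lintegral_map (measurable_of_countable _) (measurable_of_countable _)]
  calc ∫⁻ x, ((min x B : ℕ) : ℝ≥0∞) ^ 2 ∂ν ≤ ∫⁻ _, (B : ℝ≥0∞) ^ 2 ∂ν :=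
        lintegral_mono fun x => by gcongr; exact min_le_right x B
    _ = (B : ℝ≥0∞) ^ 2 := by simp

namespace GaltonWatson

variable {Ω : Type}

def process (X : ℕ → ℕ → Ω → ℕ) : ℕ → Ω → ℕ
  | 0 => fun _ => 1
  | n + 1 => fun ω => ∑ i ∈ Finset.range (process X n ω), X n i ω

variable {X : ℕ → ℕ → Ω → ℕ}

theorem eq_process {Y : ℕ → Ω → ℕ} (hY0 : ∀ ω, Y 0 ω = 1)
    (hY : ∀ n ω, Y (n + 1) ω = ∑ i ∈ Finset.range (Y n ω), X n i ω) : Y = process X := by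
  funext n ω
  induction n with
  | zero => exact hY0 ω
  | succ n ih => rw [hY, ih]; rfl

theorem process_mono {X' : ℕ → ℕ → Ω → ℕ} (h : ∀ n i ω, X n i ω ≤ X' n i ω) (n : ℕ) (ω : Ω) :
    process X n ω ≤ process X' n ω := by
  induction n with
  | zero => rfl
  | succ n ih =>
    calc ∑ i ∈ Finset.range (process X n ω), X n i ω
        ≤ ∑ i ∈ Finset.range (process X' n ω), X n i ω :=
          Finset.sum_le_sum_of_subset (Finset.range_subset_range.2 ih)
      _ ≤ ∑ i ∈ Finset.range (process X' n ω), X' n i ω :=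
          Finset.sum_le_sum fun i _ => h n i ω

theorem process_succ_eq_zero {n : ℕ} {ω : Ω} (h : process X n ω = 0) :
    process X (n + 1) ω = 0 := by
  simp [process, h]

def alive (X : ℕ → ℕ → Ω → ℕ) (n i : ℕ) (ω : Ω) : ℝ≥0∞ :=
  if i < process X n ω then 1 else 0

theorem natCast_process_eq_tsum_alive (n : ℕ) (ω : Ω) :
    (process X n ω : ℝ≥0∞) = ∑' i, alive X n i ω := by
  rw [tsum_eq_sum (s := Finset.range (process X n ω)) fun i hi => by simp_all [alive],
    Finset.sum_congr rfl fun i hi => show alive X n i ω = 1 from if_pos (Finset.mem_range.1 hi)]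
  simp

theorem natCast_process_succ_eq_tsum (n : ℕ) (ω : Ω) :
    (process X (n + 1) ω : ℝ≥0∞) = ∑' i, alive X n i ω * X n i ω := by
  rw [tsum_eq_sum (s := Finset.range (process X n ω)) fun i hi => by simp_all [alive],
    process, Nat.cast_sum]
  exact Finset.sum_congr rfl fun i hi => by simp_all [alive]

@[reducible]
def offspringSigma (X : ℕ → ℕ → Ω → ℕ) (S : Set (ℕ × ℕ)) : MeasurableSpace Ω :=
  ⨆ p ∈ S, MeasurableSpace.comap (X p.1 p.2) inferInstance

theorem measurable_offspringSigma {S : Set (ℕ × ℕ)} {n i : ℕ} (h : (n, i) ∈ S) :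
    Measurable[offspringSigma X S] (X n i) :=
  measurable_iff_comap_le.2 <| le_iSup₂ (f := fun p (_ : p ∈ S) =>
    MeasurableSpace.comap (X p.1 p.2) inferInstance) (n, i) h

theorem offspringSigma_mono {S T : Set (ℕ × ℕ)} (h : S ⊆ T) :
    offspringSigma X S ≤ offspringSigma X T :=
  biSup_mono h

theorem measurable_process (n : ℕ) :
    Measurable[offspringSigma X {p | p.1 < n}] (process X n) := by
  induction n with
  | zero => exact measurable_const
  | succ n ih =>
    set m := offspringSigma X {p | p.1 < n + 1}
    refine @measurable_to_countable' ℕ Ω _ _ m _ fun v => ?_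
    have : process X (n + 1) ⁻¹' {v} =
        ⋃ k, process X n ⁻¹' {k} ∩ {ω | ∑ i ∈ Finset.range k, X n i ω = v} := by
      ext ω; simp [process]
    rw [this]
    refine MeasurableSet.iUnion (m := m) fun k => MeasurableSet.inter (m := m) ?_ ?_
    · exact (ih.mono (offspringSigma_mono fun p (hp : p.1 < n) => Nat.lt_succ_of_lt hp) le_rfl)
        (measurableSet_singleton k)
    · exact (Finset.measurable_sum (m := m) _ fun i _ =>
        measurable_offspringSigma (S := {p | p.1 < n + 1}) (Nat.lt_succ_self n))
        (measurableSet_singleton v)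

theorem measurable_alive (n i : ℕ) : Measurable[offspringSigma X {p | p.1 < n}] (alive X n i) :=
  Measurable.ite (measurableSet_lt measurable_const (measurable_process n))
    measurable_const measurable_const

theorem measurable_natCast_offspring (n i : ℕ) :
    Measurable[offspringSigma X {p | p.1 = n}] fun ω => (X n i ω : ℝ≥0∞) :=
  (measurable_offspringSigma (S := {p | p.1 = n}) rfl).ennreal_natCast

variable [MeasurableSpace Ω]

theorem offspringSigma_le (hX : ∀ n i, Measurable (X n i)) (S : Set (ℕ × ℕ)) :
    offspringSigma X S ≤ ‹MeasurableSpace Ω› :=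
  iSup₂_le fun p _ => measurable_iff_comap_le.1 (hX p.1 p.2)

variable {P : Measure Ω} {ν : Measure ℕ}
  (hX : ∀ n i, Measurable (X n i)) (hind : iIndepFun (fun p : ℕ × ℕ => X p.1 p.2) P)
  (hmap : ∀ n i, Measure.map (X n i) P = ν)

include hX hind in
theorem lintegral_mul_eq_of_disjoint {S T : Set (ℕ × ℕ)} (hST : Disjoint S T)
    {φ ψ : Ω → ℝ≥0∞} (hφ : Measurable[offspringSigma X S] φ)
    (hψ : Measurable[offspringSigma X T] ψ) :
    ∫⁻ ω, φ ω * ψ ω ∂P = (∫⁻ ω, φ ω ∂P) * ∫⁻ ω, ψ ω ∂P :=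
  lintegral_mul_eq_lintegral_mul_lintegral_of_independent_measurableSpace
    (offspringSigma_le hX S) (offspringSigma_le hX T)
    (indep_iSup_of_disjoint (m := fun p : ℕ × ℕ => MeasurableSpace.comap (X p.1 p.2) inferInstance)
      (fun p => measurable_iff_comap_le.1 (hX p.1 p.2))
      ((iIndepFun_iff_iIndep _ _ _).1 hind) hST) hφ hψ

include hX hind in
theorem lintegral_mul_eq_of_past_of_current {n : ℕ} {φ ψ : Ω → ℝ≥0∞}
    (hφ : Measurable[offspringSigma X {p | p.1 < n}] φ)
    (hψ : Measurable[offspringSigma X {p | p.1 = n}] ψ) :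
    ∫⁻ ω, φ ω * ψ ω ∂P = (∫⁻ ω, φ ω ∂P) * ∫⁻ ω, ψ ω ∂P :=
  lintegral_mul_eq_of_disjoint hX hind
    (Set.disjoint_left.2 fun p (hp : p.1 < n) (hq : p.1 = n) => hp.ne hq) hφ hψ

include hX hmap in
theorem lintegral_comp_offspring (n i : ℕ) (g : ℕ → ℝ≥0∞) :
    ∫⁻ ω, g (X n i ω) ∂P = ∫⁻ x, g x ∂ν := by
  rw [← hmap n i, lintegral_map (measurable_of_countable g) (hX n i)]

include hX hind hmap in
theorem lintegral_offspring_mul_le (n i j : ℕ) :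
    ∫⁻ ω, (X n i ω : ℝ≥0∞) * X n j ω ∂P
      ≤ (∫⁻ x, (x : ℝ≥0∞) ∂ν) ^ 2 + if i = j then ∫⁻ x, (x : ℝ≥0∞) ^ 2 ∂ν else 0 := by
  rcases eq_or_ne i j with rfl | hij
  · rw [if_pos rfl, ← lintegral_comp_offspring hX hmap n i (fun x => (x : ℝ≥0∞) ^ 2)]
    simp only [sq, le_add_self]
  · have hi : Measurable[offspringSigma X {(n, i)}] fun ω => (X n i ω : ℝ≥0∞) :=
      (measurable_offspringSigma (Set.mem_singleton _)).ennreal_natCast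
    have hj : Measurable[offspringSigma X {(n, j)}] fun ω => (X n j ω : ℝ≥0∞) :=
      (measurable_offspringSigma (Set.mem_singleton _)).ennreal_natCast
    rw [if_neg hij, add_zero, lintegral_mul_eq_of_disjoint hX hind (by simpa using hij) hi hj,
      lintegral_comp_offspring hX hmap n i (fun x => (x : ℝ≥0∞)),
      lintegral_comp_offspring hX hmap n j (fun x => (x : ℝ≥0∞)), sq]

include hX in
theorem measurable_alive' (n i : ℕ) : Measurable (alive X n i) :=
  (measurable_alive n i).mono (offspringSigma_le hX _) le_rfl

include hX hind hmap in
theorem lintegral_process_succ (n : ℕ) :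
    ∫⁻ ω, (process X (n + 1) ω : ℝ≥0∞) ∂P
      = (∫⁻ ω, (process X n ω : ℝ≥0∞) ∂P) * ∫⁻ x, (x : ℝ≥0∞) ∂ν := by
  have hI := measurable_alive' hX n
  calc ∫⁻ ω, (process X (n + 1) ω : ℝ≥0∞) ∂P
      = ∑' i, ∫⁻ ω, alive X n i ω * X n i ω ∂P := by
        simp only [natCast_process_succ_eq_tsum]
        exact lintegral_tsum fun i => ((hI i).fun_mul (hX n i).ennreal_natCast).aemeasurable
    _ = ∑' i, (∫⁻ ω, alive X n i ω ∂P) * ∫⁻ x, (x : ℝ≥0∞) ∂ν := by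
        refine tsum_congr fun i => ?_
        rw [lintegral_mul_eq_of_past_of_current hX hind (measurable_alive n i)
          (measurable_natCast_offspring n i),
          lintegral_comp_offspring hX hmap n i (fun x => (x : ℝ≥0∞))]
    _ = (∫⁻ ω, (process X n ω : ℝ≥0∞) ∂P) * ∫⁻ x, (x : ℝ≥0∞) ∂ν := by
        rw [ENNReal.tsum_mul_right, ← lintegral_tsum fun i => (hI i).aemeasurable]
        simp only [← natCast_process_eq_tsum_alive]

include hX hind hmap in
theorem lintegral_alive_mul_offspring_le (n i j : ℕ) :
    ∫⁻ ω, alive X n i ω * alive X n j ω * (X n i ω * X n j ω) ∂P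
      ≤ (∫⁻ ω, alive X n i ω * alive X n j ω ∂P) * (∫⁻ x, (x : ℝ≥0∞) ∂ν) ^ 2
        + if j = i then (∫⁻ ω, alive X n i ω ∂P) * ∫⁻ x, (x : ℝ≥0∞) ^ 2 ∂ν else 0 := by
  rw [lintegral_mul_eq_of_past_of_current hX hind
    ((measurable_alive n i).fun_mul (measurable_alive n j))
    ((measurable_natCast_offspring n i).fun_mul (measurable_natCast_offspring n j))]
  calc _ ≤ (∫⁻ ω, alive X n i ω * alive X n j ω ∂P)
        * ((∫⁻ x, (x : ℝ≥0∞) ∂ν) ^ 2 + if i = j then ∫⁻ x, (x : ℝ≥0∞) ^ 2 ∂ν else 0) := by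
        gcongr; exact lintegral_offspring_mul_le hX hind hmap n i j
    _ = _ := by
        rcases eq_or_ne i j with rfl | hij
        · simp only [alive, mul_add, ← ite_and, and_self, mul_ite, mul_one, mul_zero]
        · simp only [if_neg hij, if_neg hij.symm, add_zero]

include hX hind hmap in
theorem lintegral_process_succ_sq_le (n : ℕ) :
    ∫⁻ ω, (process X (n + 1) ω : ℝ≥0∞) ^ 2 ∂P
      ≤ (∫⁻ ω, (process X n ω : ℝ≥0∞) ^ 2 ∂P) * (∫⁻ x, (x : ℝ≥0∞) ∂ν) ^ 2
        + (∫⁻ ω, (process X n ω : ℝ≥0∞) ∂P) * ∫⁻ x, (x : ℝ≥0∞) ^ 2 ∂ν := by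
  have hI := measurable_alive' hX n
  have hII : ∀ i j, Measurable fun ω => alive X n i ω * alive X n j ω :=
    fun i j => (hI i).fun_mul (hI j)
  have hterm : ∀ i j, Measurable fun ω => alive X n i ω * alive X n j ω * (X n i ω * X n j ω) :=
    fun i j => (hII i j).fun_mul ((hX n i).ennreal_natCast.fun_mul (hX n j).ennreal_natCast)
  calc ∫⁻ ω, (process X (n + 1) ω : ℝ≥0∞) ^ 2 ∂P
      = ∫⁻ ω, ∑' i, ∑' j, alive X n i ω * alive X n j ω * (X n i ω * X n j ω) ∂P := by
        simp only [natCast_process_succ_eq_tsum, tsum_sq_eq_tsum_tsum_mul]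
        exact lintegral_congr fun ω => tsum_congr fun i => tsum_congr fun j => by ring
    _ = ∑' i, ∑' j, ∫⁻ ω, alive X n i ω * alive X n j ω * (X n i ω * X n j ω) ∂P := by
        rw [lintegral_tsum fun i => (Measurable.tsum (hterm i)).aemeasurable]
        exact tsum_congr fun i => lintegral_tsum fun j => (hterm i j).aemeasurable
    _ ≤ ∑' i, ∑' j, ((∫⁻ ω, alive X n i ω * alive X n j ω ∂P) * (∫⁻ x, (x : ℝ≥0∞) ∂ν) ^ 2
          + if j = i then (∫⁻ ω, alive X n i ω ∂P) * ∫⁻ x, (x : ℝ≥0∞) ^ 2 ∂ν else 0) :=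
        ENNReal.tsum_le_tsum fun i => ENNReal.tsum_le_tsum fun j =>
          lintegral_alive_mul_offspring_le hX hind hmap n i j
    _ = _ := by
        simp only [ENNReal.tsum_add, tsum_ite_eq, ENNReal.tsum_mul_right]
        rw [← lintegral_tsum fun i => (hI i).aemeasurable]
        simp only [← lintegral_tsum fun j => (hII _ j).aemeasurable]
        rw [← lintegral_tsum fun i => (Measurable.tsum (hII i)).aemeasurable]
        simp only [natCast_process_eq_tsum_alive, tsum_sq_eq_tsum_tsum_mul]

variable [IsProbabilityMeasure P]

include hX hind hmap in
theorem lintegral_process (n : ℕ) :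
    ∫⁻ ω, (process X n ω : ℝ≥0∞) ∂P = (∫⁻ x, (x : ℝ≥0∞) ∂ν) ^ n := by
  induction n with
  | zero => simp [process]
  | succ n ih => rw [lintegral_process_succ hX hind hmap, ih, pow_succ]

include hX hind hmap in
theorem lintegral_process_sq_le (hm : 1 < ∫⁻ x, (x : ℝ≥0∞) ∂ν) (hm₂ : ∫⁻ x, (x : ℝ≥0∞) ^ 2 ∂ν ≠ ⊤)
    (n : ℕ) :
    ∫⁻ ω, (process X n ω : ℝ≥0∞) ^ 2 ∂P
      ≤ (1 + (∫⁻ x, (x : ℝ≥0∞) ^ 2 ∂ν) * (1 - (∫⁻ x, (x : ℝ≥0∞) ∂ν)⁻¹)⁻¹)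
        * (∫⁻ ω, (process X n ω : ℝ≥0∞) ∂P) ^ 2 := by
  rw [lintegral_process hX hind hmap]
  refine le_of_le_mul_sq_add (a := fun k => ∫⁻ ω, (process X k ω : ℝ≥0∞) ^ 2 ∂P) hm
    (ne_top_of_le_ne_top hm₂ (lintegral_natCast_le_lintegral_sq ν)) (by simp [process])
    (fun k => ?_) n
  rw [← lintegral_process hX hind hmap k, mul_comm _ (∫⁻ ω, (process X k ω : ℝ≥0∞) ∂P)]
  exact lintegral_process_succ_sq_le hX hind hmap k

end GaltonWatson

namespace IsGW

variable {Ω : Type} [MeasurableSpace Ω] {P : Measure Ω} {ν : Measure ℕ} {X : ℕ → ℕ → Ω → ℕ}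
  {Y : ℕ → Ω → ℕ}

theorem measure_forall_ne_zero_pos [IsProbabilityMeasure P] (h : IsGW P ν X Y)
    (hY0 : ∀ ω, Y 0 ω = 1) (hm : 1 < ∫⁻ x, (x : ℝ≥0∞) ∂ν)
    (hm₂ : ∫⁻ x, (x : ℝ≥0∞) ^ 2 ∂ν ≠ ⊤) :
    0 < P {ω | ∀ k, Y k ω ≠ 0} := by
  obtain ⟨hX, hind, hmap, hY⟩ := h
  obtain rfl := GaltonWatson.eq_process hY0 hY
  set K := 1 + (∫⁻ x, (x : ℝ≥0∞) ^ 2 ∂ν) * (1 - (∫⁻ x, (x : ℝ≥0∞) ∂ν)⁻¹)⁻¹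
  have hK : K ≠ ⊤ := ENNReal.add_ne_top.2 ⟨one_ne_top, ENNReal.mul_ne_top hm₂
    (ENNReal.inv_ne_top.2 (tsub_pos_iff_lt.2 (ENNReal.inv_lt_one.2 hm)).ne')⟩
  have hZ : ∀ n, Measurable (GaltonWatson.process X n) := fun n =>
    (GaltonWatson.measurable_process n).mono (GaltonWatson.offspringSigma_le hX _) le_rfl
  set A : ℕ → Set Ω := fun n => {ω | GaltonWatson.process X n ω ≠ 0}
  have hA_le : ∀ n, K⁻¹ ≤ P (A n) := fun n => by
    have hmean := GaltonWatson.lintegral_process hX hind hmap n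
    simpa using inv_le_measure_ne_zero_of_lintegral_sq_le (hZ n).ennreal_natCast
      (by rw [hmean]; exact pow_ne_zero n (zero_lt_one.trans hm).ne')
      (by rw [hmean]; exact pow_ne_top (ne_top_of_le_ne_top hm₂
        (lintegral_natCast_le_lintegral_sq ν)))
      (GaltonWatson.lintegral_process_sq_le hX hind hmap hm hm₂ n)
  have hanti : Antitone A := antitone_nat_of_succ_le fun n ω hω h0 =>
    hω (GaltonWatson.process_succ_eq_zero h0)
  calc 0 < K⁻¹ := ENNReal.inv_pos.2 hK
    _ ≤ P (⋂ n, A n) := by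
      rw [hanti.measure_iInter (fun n => ((hZ n) (measurableSet_singleton 0).compl)
        |>.nullMeasurableSet) ⟨0, measure_ne_top P _⟩]
      exact le_iInf hA_le
    _ = P {ω | ∀ k, GaltonWatson.process X k ω ≠ 0} := by congr 1; ext ω; simp [A]

theorem natCast_mul_measure_le_lintegral (h : IsGW P ν X Y) {N : ℕ}
    (hY0 : ∀ ω, Y 0 ω = N) (hN : N ≠ 0) (a : ℕ) :
    (a : ℝ≥0∞) * P {ω | a * N ≤ Y 1 ω} ≤ ∫⁻ x, (x : ℝ≥0∞) ∂ν := by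
  obtain ⟨hX, -, hmap, hY⟩ := h
  have hY1 : ∀ ω, Y 1 ω = ∑ i ∈ Finset.range N, X 0 i ω := fun ω => by rw [hY, hY0]
  have hmeas : Measurable fun ω => (Y 1 ω : ℝ≥0∞) := by
    simp only [hY1]
    exact (Finset.measurable_sum _ fun i _ => hX 0 i).ennreal_natCast
  have hmean : ∫⁻ ω, (Y 1 ω : ℝ≥0∞) ∂P = N * ∫⁻ x, (x : ℝ≥0∞) ∂ν := by
    simp only [hY1, Nat.cast_sum]
    rw [lintegral_finsetSum _ fun i _ => (hX 0 i).ennreal_natCast]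
    simp [GaltonWatson.lintegral_comp_offspring hX hmap 0 _ (fun x => (x : ℝ≥0∞))]
  have hmarkov : ((a * N : ℕ) : ℝ≥0∞) * P {ω | ((a * N : ℕ) : ℝ≥0∞) ≤ Y 1 ω}
      ≤ N * ∫⁻ x, (x : ℝ≥0∞) ∂ν :=
    hmean ▸ mul_meas_ge_le_lintegral₀ hmeas.aemeasurable _
  simp only [Nat.cast_le] at hmarkov
  rw [← ENNReal.mul_le_mul_iff_right (Nat.cast_ne_zero.2 hN) (natCast_ne_top N)]
  calc (N : ℝ≥0∞) * (a * P {ω | a * N ≤ Y 1 ω}) = (a * N : ℕ) * P {ω | a * N ≤ Y 1 ω} := by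
        push_cast; ring
    _ ≤ _ := hmarkov

theorem truncate (h : IsGW P ν X Y) (B : ℕ) :
    IsGW P (ν.map (min · B)) (fun n i ω => min (X n i ω) B)
      (GaltonWatson.process fun n i ω => min (X n i ω) B) := by
  obtain ⟨hX, hind, hmap, -⟩ := h
  refine ⟨fun n i => (hX n i).min measurable_const,
    hind.comp (fun _ x => min x B) (fun _ => measurable_of_countable _), fun n i => ?_,
    fun n ω => rfl⟩
  rw [← hmap n i, Measure.map_map (measurable_of_countable _) (hX n i)]
  rfl

end IsGW

theorem stmt12_general {Ω1 ΩN : Type} [MeasurableSpace Ω1] [MeasurableSpace ΩN]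
    (P1 : Measure Ω1) (PN : Measure ΩN)
    [IsProbabilityMeasure P1]
    (ν : Measure ℕ) [IsProbabilityMeasure ν]
    (X1 : ℕ → ℕ → Ω1 → ℕ) (Y1 : ℕ → Ω1 → ℕ)
    (XN : ℕ → ℕ → ΩN → ℕ) (YN : ℕ → ΩN → ℕ)
    (h1 : IsGW P1 ν X1 Y1) (h10 : ∀ ω, Y1 0 ω = 1)
    (N a : ℕ) (hN : 1 ≤ N)
    (hN' : IsGW PN ν XN YN) (hN0 : ∀ ω, YN 0 ω = N)
    (hyp : 1 < (a : ℝ≥0∞) * PN {ω | a * N ≤ YN 1 ω}) :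
    0 < P1 {ω | ∀ k, Y1 k ω ≠ 0} := by
  obtain ⟨B, hB⟩ := exists_lt_lintegral_min
    (hyp.trans_le (IsGW.natCast_mul_measure_le_lintegral hN' hN0 (by omega) a))
  have hm : 1 < ∫⁻ y, (y : ℝ≥0∞) ∂(ν.map (min · B)) := by
    rwa [lintegral_map (measurable_of_countable _) (measurable_of_countable _)]
  have hsurvive := IsGW.measure_forall_ne_zero_pos (IsGW.truncate h1 B) (fun _ => rfl) hm
    (ne_top_of_le_ne_top (by simp) (lintegral_sq_map_min_le ν B))
  obtain rfl := GaltonWatson.eq_process h10 h1.2.2.2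
  exact hsurvive.trans_le <| measure_mono fun ω hω k hk => hω k <| Nat.eq_zero_of_le_zero <|
    hk ▸ GaltonWatson.process_mono (fun n i ω => min_le_left _ _) k ω

/-- If a·P^N(Y₁ ≥ a·N) > 1 for some integers N, a ≥ 1, then the Galton–Watson
process started from one individual survives with positive probability. -/
theorem stmt12 {Ω1 ΩN : Type} [MeasurableSpace Ω1] [MeasurableSpace ΩN]
    (P1 : Measure Ω1) (PN : Measure ΩN)
    [IsProbabilityMeasure P1] [IsProbabilityMeasure PN]
    (ν : Measure ℕ) [IsProbabilityMeasure ν]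
    (X1 : ℕ → ℕ → Ω1 → ℕ) (Y1 : ℕ → Ω1 → ℕ)
    (XN : ℕ → ℕ → ΩN → ℕ) (YN : ℕ → ΩN → ℕ)
    (h1 : IsGW P1 ν X1 Y1) (h10 : ∀ ω, Y1 0 ω = 1)
    (N a : ℕ) (hN : 1 ≤ N) (ha : 1 ≤ a)
    (hN' : IsGW PN ν XN YN) (hN0 : ∀ ω, YN 0 ω = N)
    (hyp : 1 < (a : ℝ≥0∞) * PN {ω | a * N ≤ YN 1 ω}) :
    0 < P1 {ω | ∀ k, Y1 k ω ≠ 0} :=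
  stmt12_general P1 PN ν X1 Y1 XN YN h1 h10 N a hN hN' hN0 hyp
end
end

section
/- Let (Y_n) and (M_n) be defined on the same probability space by Y_0 = N, M_0 = 1, Y_{n+1} = Σ_{1≤i≤Y_n} X_i^n, and M_{n+1} = Σ_{i=1}^{M_n} a·B_i^n where B_i^n is the indicator that X_{(i−1)N+1}^n + ⋯ + X_{iN}^n ≥ a·N, with (X_i^n) i.i.d. of law ν. Then for all n, Y_n ≥ N·M_n. -/
open MeasureTheory ProbabilityTheory Filter ENNReal
noncomputable section

/-- Block comparison: with Y₀ = N, M₀ = 1, Y_{n+1} = ∑_{i<Y_n} X n i and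
M_{n+1} = ∑_{i<M_n} a·𝟙{∑_{j<N} X n (iN+j) ≥ aN}, one has Y_n ≥ N·M_n for all n. -/
theorem stmt13 {Ω : Type} (N a : ℕ) (hN : 1 ≤ N) (ha : 1 ≤ a)
    (X : ℕ → ℕ → Ω → ℕ) (Y M : ℕ → Ω → ℕ)
    (hY0 : ∀ ω, Y 0 ω = N) (hM0 : ∀ ω, M 0 ω = 1)
    (hY : ∀ n ω, Y (n + 1) ω = ∑ i ∈ Finset.range (Y n ω), X n i ω)
    (hM : ∀ n ω, M (n + 1) ω = ∑ i ∈ Finset.range (M n ω),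
      a * (if a * N ≤ ∑ j ∈ Finset.range N, X n (i * N + j) ω then 1 else 0)) :
    ∀ n ω, N * M n ω ≤ Y n ω := by
  have block : ∀ (f : ℕ → ℕ) (m : ℕ),
      ∑ i ∈ Finset.range (m * N), f i
        = ∑ i ∈ Finset.range m, ∑ j ∈ Finset.range N, f (i * N + j) := by
    intro f m
    induction m with
    | zero => simp
    | succ m ih =>
      rw [Nat.succ_mul, Finset.sum_range_add, ih, Finset.sum_range_succ]
  intro n
  induction n with
  | zero => intro ω; simp [hY0, hM0]
  | succ n ih =>
    intro ω
    rw [hY, hM, Finset.mul_sum]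
    calc ∑ i ∈ Finset.range (M n ω),
          N * (a * (if a * N ≤ ∑ j ∈ Finset.range N, X n (i * N + j) ω then 1 else 0))
        ≤ ∑ i ∈ Finset.range (M n ω), ∑ j ∈ Finset.range N, X n (i * N + j) ω := by
          apply Finset.sum_le_sum
          intro i _
          split_ifs with h
          · calc N * (a * 1) = a * N := by ring
              _ ≤ _ := h
          · simp
      _ = ∑ i ∈ Finset.range (M n ω * N), X n i ω := (block (fun i => X n i ω) (M n ω)).symm
      _ ≤ ∑ i ∈ Finset.range (Y n ω), X n i ω := by
          apply Finset.sum_le_sum_of_subset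
          apply Finset.range_subset_range.2
          rw [mul_comm]; exact ih ω
end
end

section
/- Let (Y_n) be a Galton-Watson process with reproduction law ν satisfying ν(0) > 0 and mean m = 1. Then P^1(τ = ∞) = 0: the critical Galton-Watson process dies out almost surely. -/
/-! Since `ν` has mean `1`, `Y` is a nonnegative martingale for the filtration generated by the
offspring numbers of the past generations, so by the martingale convergence theorem almost every
path of `Y` is bounded. On the other hand, while `0 < Y n < M`, the next generation is empty with
conditional probability at least `ν {0} ^ M > 0`, independently of the past; hence a path cannot
stay in `{1, …, M - 1}` forever. -/

open MeasureTheory ProbabilityTheory Filter ENNReal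
noncomputable section

open scoped NNReal

theorem Measurable.sum_range_of_measurable_bound {α : Type*} {m : MeasurableSpace α}
    {N : α → ℕ} {g : ℕ → α → ℕ} (hN : Measurable N) (hg : ∀ i, Measurable (g i)) :
    Measurable fun x => ∑ i ∈ Finset.range (N x), g i x :=
  have : Measurable fun p : α × ℕ => ∑ i ∈ Finset.range p.2, g i p.1 :=
    measurable_from_prod_countable_left fun k =>
      Finset.measurable_sum (Finset.range k) fun i _ => hg i
  this.comp (measurable_id.prodMk hN)

section Offspring

variable {Ω : Type} {X : ℕ → ℕ → Ω → ℕ}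

abbrev offspringSigma (X : ℕ → ℕ → Ω → ℕ) (S : Set (ℕ × ℕ)) : MeasurableSpace Ω :=
  ⨆ p ∈ S, MeasurableSpace.comap (X p.1 p.2) inferInstance

theorem measurable_offspringSigma {S : Set (ℕ × ℕ)} {n i : ℕ} (h : (n, i) ∈ S) :
    Measurable[offspringSigma X S] (X n i) :=
  measurable_iff_comap_le.mpr
    (le_biSup (fun p : ℕ × ℕ => MeasurableSpace.comap (X p.1 p.2) inferInstance) h)

variable [mΩ : MeasurableSpace Ω]

theorem offspringSigma_le (hX : ∀ n i, Measurable (X n i)) (S : Set (ℕ × ℕ)) :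
    offspringSigma X S ≤ mΩ :=
  iSup₂_le fun p _ => (hX p.1 p.2).comap_le

theorem indep_offspringSigma {P : Measure Ω} (hX : ∀ n i, Measurable (X n i))
    (hind : iIndepFun (fun p : ℕ × ℕ => X p.1 p.2) P) {S T : Set (ℕ × ℕ)}
    (hST : Disjoint S T) : Indep (offspringSigma X S) (offspringSigma X T) P :=
  indep_iSup_of_disjoint (m := fun p : ℕ × ℕ => MeasurableSpace.comap (X p.1 p.2) inferInstance)
    (fun p => (hX p.1 p.2).comap_le) hind.iIndep hST

/-- `ℱ n` is generated by the offspring numbers of the generations `< n`, so that `Y n` is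
`ℱ n`-measurable. -/
def gwFiltration (hX : ∀ n i, Measurable (X n i)) : Filtration ℕ mΩ where
  seq n := offspringSigma X {p | p.1 < n}
  mono' _ _ h := biSup_mono fun _ hp => lt_of_lt_of_le hp h
  le' _ := offspringSigma_le hX _

end Offspring

namespace IsGW

variable {Ω : Type} [MeasurableSpace Ω] {P : Measure Ω} {ν : Measure ℕ}
  {X : ℕ → ℕ → Ω → ℕ} {Y : ℕ → Ω → ℕ}

theorem adapted (hGW : IsGW P ν X Y) {N : ℕ} (h0 : ∀ ω, Y 0 ω = N) :
    Adapted (gwFiltration hGW.1) Y := by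
  intro n
  induction n with
  | zero => simp [show Y 0 = fun _ => N from funext h0]
  | succ n ih =>
    have hY : Y (n + 1) = fun ω => ∑ i ∈ Finset.range (Y n ω), X n i ω :=
      funext (hGW.2.2.2 n)
    rw [hY]
    exact (ih.mono ((gwFiltration hGW.1).mono n.le_succ) le_rfl).sum_range_of_measurable_bound
      fun i => measurable_offspringSigma (Nat.lt_succ_self n)

theorem measurable_Y (hGW : IsGW P ν X Y) {N : ℕ} (h0 : ∀ ω, Y 0 ω = N) (n : ℕ) :
    Measurable (Y n) :=
  (hGW.adapted h0).measurable

theorem indep_past_future (hGW : IsGW P ν X Y) (n : ℕ) :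
    Indep (gwFiltration hGW.1 n) (offspringSigma X {p | n ≤ p.1}) P :=
  indep_offspringSigma hGW.1 hGW.2.1
    (Set.disjoint_left.mpr fun _ (hp : _ < n) (hq : n ≤ _) => hq.not_gt hp)

theorem lintegral_X (hGW : IsGW P ν X Y) (n i : ℕ) :
    ∫⁻ ω, (X n i ω : ℝ≥0∞) ∂P = ∫⁻ x, (x : ℝ≥0∞) ∂ν := by
  rw [← hGW.2.2.1 n i, lintegral_map measurable_from_top (hGW.1 n i)]

theorem setLIntegral_X (hGW : IsGW P ν X Y) {n i : ℕ} {B : Set Ω}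
    (hB : MeasurableSet[gwFiltration hGW.1 n] B) :
    ∫⁻ ω in B, (X n i ω : ℝ≥0∞) ∂P = P B * ∫⁻ x, (x : ℝ≥0∞) ∂ν := by
  have hBm : MeasurableSet B := (gwFiltration hGW.1).le n _ hB
  calc ∫⁻ ω in B, (X n i ω : ℝ≥0∞) ∂P
      = ∫⁻ ω, B.indicator 1 ω * (X n i ω : ℝ≥0∞) ∂P := by
        rw [← lintegral_indicator hBm]
        congr 1 with ω
        by_cases hω : ω ∈ B <;> simp [hω]
    _ = P B * ∫⁻ x, (x : ℝ≥0∞) ∂ν := by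
        rw [lintegral_mul_eq_lintegral_mul_lintegral_of_independent_measurableSpace
          (f := B.indicator 1) (g := fun ω => (X n i ω : ℝ≥0∞))
          ((gwFiltration hGW.1).le n) (offspringSigma_le hGW.1 _) (hGW.indep_past_future n)
          (measurable_const.indicator hB)
          (measurable_from_top.comp (measurable_offspringSigma (le_refl n))),
          lintegral_indicator_one hBm, hGW.lintegral_X]

theorem setLIntegral_Y_succ (hGW : IsGW P ν X Y) {N : ℕ} (h0 : ∀ ω, Y 0 ω = N) {n : ℕ}
    {B : Set Ω} (hB : MeasurableSet[gwFiltration hGW.1 n] B) :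
    ∫⁻ ω in B, (Y (n + 1) ω : ℝ≥0∞) ∂P
      = (∫⁻ x, (x : ℝ≥0∞) ∂ν) * ∫⁻ ω in B, (Y n ω : ℝ≥0∞) ∂P := by
  set m := ∫⁻ x, (x : ℝ≥0∞) ∂ν
  set B' : ℕ → Set Ω := fun j => B ∩ Y n ⁻¹' {j}
  have hB' : ∀ j, MeasurableSet[gwFiltration hGW.1 n] (B' j) := fun j =>
    hB.inter (hGW.adapted h0 n (measurableSet_singleton j))
  have hB'm : ∀ j, MeasurableSet (B' j) := fun j => (gwFiltration hGW.1).le n _ (hB' j)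
  have hdisj : Pairwise (Function.onFun Disjoint B') := fun a b hab =>
    ((Set.disjoint_singleton.2 hab).preimage (Y n)).mono Set.inter_subset_right
      Set.inter_subset_right
  have hU : ⋃ j, B' j = B := by
    rw [← Set.inter_iUnion, ← Set.preimage_iUnion, Set.iUnion_singleton_eq_range,
      Set.range_id', Set.preimage_univ, Set.inter_univ]
  rw [← hU, lintegral_iUnion hB'm hdisj, lintegral_iUnion hB'm hdisj, ← ENNReal.tsum_mul_left]
  refine tsum_congr fun j => ?_
  have hY : ∀ ω ∈ B' j, Y n ω = j := fun ω hω => hω.2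
  calc ∫⁻ ω in B' j, (Y (n + 1) ω : ℝ≥0∞) ∂P
      = ∫⁻ ω in B' j, ∑ i ∈ Finset.range j, (X n i ω : ℝ≥0∞) ∂P :=
        setLIntegral_congr_fun (hB'm j) fun ω hω => by
          rw [hGW.2.2.2 n ω, hY ω hω, Nat.cast_sum]
    _ = ∑ i ∈ Finset.range j, P (B' j) * m := by
        rw [lintegral_finsetSum (f := fun i ω => (X n i ω : ℝ≥0∞)) _
          fun i _ => measurable_from_top.comp (hGW.1 n i)]
        exact Finset.sum_congr rfl fun i _ => hGW.setLIntegral_X (hB' j)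
    _ = m * ∫⁻ ω in B' j, (Y n ω : ℝ≥0∞) ∂P := by
        rw [setLIntegral_congr_fun (hB'm j) fun ω hω => by rw [hY ω hω], setLIntegral_const,
          Finset.sum_const, Finset.card_range, nsmul_eq_mul]
        ring

theorem lintegral_Y [IsProbabilityMeasure P] (hGW : IsGW P ν X Y) {N : ℕ}
    (h0 : ∀ ω, Y 0 ω = N) (n : ℕ) :
    ∫⁻ ω, (Y n ω : ℝ≥0∞) ∂P = (∫⁻ x, (x : ℝ≥0∞) ∂ν) ^ n * N := by
  induction n with
  | zero => simp [h0]
  | succ n ih =>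
    have := hGW.setLIntegral_Y_succ h0 (n := n) MeasurableSet.univ
    rw [Measure.restrict_univ] at this
    rw [this, ih, pow_succ]
    ring

theorem martingale [IsProbabilityMeasure P] (hGW : IsGW P ν X Y) {N : ℕ}
    (h0 : ∀ ω, Y 0 ω = N) (hm : ∫⁻ x, (x : ℝ≥0∞) ∂ν = 1) :
    Martingale (fun n ω => (Y n ω : ℝ)) (gwFiltration hGW.1) P := by
  have hmeas : ∀ n, Measurable fun ω => (Y n ω : ℝ≥0∞) := fun n =>
    measurable_from_top.comp (hGW.measurable_Y h0 n)
  refine martingale_of_setIntegral_eq_succ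
    (fun n => (measurable_from_top.comp (hGW.adapted h0 n)).stronglyMeasurable)
    (fun n => ?_) (fun n B hB => ?_)
  · have := integrable_toReal_of_lintegral_ne_top (μ := P) (hmeas n).aemeasurable
      (by simp [hGW.lintegral_Y h0, hm])
    simpa using this
  · have h := hGW.setLIntegral_Y_succ h0 hB
    rw [hm, one_mul] at h
    simp only [← ENNReal.toReal_natCast]
    rw [integral_toReal (hmeas n).aemeasurable.restrict (by simp),
      integral_toReal (hmeas (n + 1)).aemeasurable.restrict (by simp), h]

theorem ae_exists_forall_lt [IsProbabilityMeasure P] (hGW : IsGW P ν X Y) {N : ℕ}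
    (h0 : ∀ ω, Y 0 ω = N) (hm : ∫⁻ x, (x : ℝ≥0∞) ∂ν = 1) :
    ∀ᵐ ω ∂P, ∃ M, ∀ k, Y k ω < M := by
  have hbdd : ∀ n, eLpNorm (fun ω => (Y n ω : ℝ)) 1 P ≤ ((N : ℝ≥0) : ℝ≥0∞) := fun n => by
    simp [eLpNorm_one_eq_lintegral_enorm, hGW.lintegral_Y h0, hm]
  filter_upwards [(hGW.martingale h0 hm).submartingale.exists_ae_tendsto_of_bdd hbdd]
    with ω ⟨c, hc⟩
  obtain ⟨b, hb⟩ := hc.bddAbove_range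
  obtain ⟨M, hM⟩ := exists_nat_gt b
  exact ⟨M, fun k => by exact_mod_cast (hb ⟨k, rfl⟩ : (Y k ω : ℝ) ≤ b).trans_lt hM⟩

theorem measure_forall_X_eq_zero (hGW : IsGW P ν X Y) (n j : ℕ) :
    P {ω | ∀ i < j, X n i ω = 0} = ν {0} ^ j := by
  have hprod := (hGW.2.1.precomp (Prod.mk_right_injective n)).meas_biInter
    (S := Finset.range j) (s := fun i => X n i ⁻¹' {0})
    fun i _ => ⟨{0}, measurableSet_singleton 0, rfl⟩
  have hX0 : ∀ i, P (X n i ⁻¹' {0}) = ν {0} := fun i => by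
    rw [← hGW.2.2.1 n i, Measure.map_apply (hGW.1 n i) (measurableSet_singleton 0)]
  have hset : {ω | ∀ i < j, X n i ω = 0} = ⋂ i ∈ Finset.range j, X n i ⁻¹' {0} := by
    ext ω; simp
  simp only [hset, hprod, hX0, Finset.prod_const, Finset.card_range]

theorem measure_inter_exists_X_ne_zero [IsProbabilityMeasure P] (hGW : IsGW P ν X Y) {n : ℕ}
    {A : Set Ω} (hA : MeasurableSet[gwFiltration hGW.1 n] A) (j : ℕ) :
    P (A ∩ {ω | ∃ i < j, X n i ω ≠ 0}) = P A * (1 - ν {0} ^ j) := by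
  have hset : {ω | ∃ i < j, X n i ω ≠ 0} = {ω | ∀ i < j, X n i ω = 0}ᶜ := by
    ext ω; simp
  have hmeas : MeasurableSet[offspringSigma X {p | n ≤ p.1}] {ω | ∀ i < j, X n i ω = 0} := by
    simp only [Set.ofPred_forall]
    exact MeasurableSet.iInter fun i => MeasurableSet.iInter fun _ =>
      measurable_offspringSigma (le_refl n) (measurableSet_singleton 0)
  rw [hset, (Indep_iff _ _ _).mp (hGW.indep_past_future n) _ _ hA hmeas.compl,
    measure_compl (offspringSigma_le hGW.1 _ _ hmeas) (measure_ne_top _ _),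
    hGW.measure_forall_X_eq_zero, measure_univ]

theorem measure_inter_Y_succ_ne_zero_le [IsProbabilityMeasure P] [IsProbabilityMeasure ν]
    (hGW : IsGW P ν X Y) {N : ℕ} (h0 : ∀ ω, Y 0 ω = N) {n M : ℕ} {B : Set Ω}
    (hB : MeasurableSet[gwFiltration hGW.1 n] B) (hBM : ∀ ω ∈ B, Y n ω < M) :
    P (B ∩ {ω | Y (n + 1) ω ≠ 0}) ≤ (1 - ν {0} ^ M) * P B := by
  set B' : ℕ → Set Ω := fun j => B ∩ Y n ⁻¹' {j}
  have hB' : ∀ j, MeasurableSet[gwFiltration hGW.1 n] (B' j) := fun j =>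
    hB.inter (hGW.adapted h0 n (measurableSet_singleton j))
  have hcover : B ∩ {ω | Y (n + 1) ω ≠ 0} ⊆
      ⋃ j ∈ Finset.range M, B' j ∩ {ω | ∃ i < j, X n i ω ≠ 0} := by
    rintro ω ⟨hωB, hω⟩
    refine Set.mem_biUnion (Finset.mem_range.2 (hBM ω hωB)) ⟨⟨hωB, rfl⟩, ?_⟩
    show ∃ i < Y n ω, X n i ω ≠ 0
    by_contra! hzero
    apply hω
    rw [hGW.2.2.2 n ω]
    exact Finset.sum_eq_zero fun i hi => hzero i (Finset.mem_range.1 hi)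
  have hdisj : Set.PairwiseDisjoint (Finset.range M : Set ℕ) B' := fun a _ b _ hab =>
    ((Set.disjoint_singleton.2 hab).preimage (Y n)).mono Set.inter_subset_right
      Set.inter_subset_right
  calc P (B ∩ {ω | Y (n + 1) ω ≠ 0})
      ≤ ∑ j ∈ Finset.range M, P (B' j ∩ {ω | ∃ i < j, X n i ω ≠ 0}) :=
        (measure_mono hcover).trans (measure_biUnion_finset_le _ _)
    _ = ∑ j ∈ Finset.range M, P (B' j) * (1 - ν {0} ^ j) :=
        Finset.sum_congr rfl fun j _ => hGW.measure_inter_exists_X_ne_zero (hB' j) j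
    _ ≤ ∑ j ∈ Finset.range M, P (B' j) * (1 - ν {0} ^ M) := by
        refine Finset.sum_le_sum fun j hj => mul_le_mul_right (tsub_le_tsub_left ?_ 1) _
        exact pow_le_pow_of_le_one zero_le prob_le_one (Finset.mem_range.1 hj).le
    _ = (1 - ν {0} ^ M) * P (⋃ j ∈ Finset.range M, B' j) := by
        rw [measure_biUnion_finset hdisj fun j _ => (gwFiltration hGW.1).le n _ (hB' j),
          Finset.mul_sum]
        exact Finset.sum_congr rfl fun j _ => mul_comm _ _
    _ ≤ (1 - ν {0} ^ M) * P B := by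
        gcongr
        exact Set.iUnion₂_subset fun j _ => Set.inter_subset_left

theorem measure_forall_Y_ne_zero_and_lt_eq_zero [IsProbabilityMeasure P]
    [IsProbabilityMeasure ν] (hGW : IsGW P ν X Y) {N : ℕ} (h0 : ∀ ω, Y 0 ω = N)
    (hν0 : 0 < ν {0}) (M : ℕ) :
    P {ω | ∀ k, Y k ω ≠ 0 ∧ Y k ω < M} = 0 := by
  set r := 1 - ν {0} ^ M
  have hr : r < 1 := ENNReal.sub_lt_self one_ne_top one_ne_zero (pow_ne_zero M hν0.ne')
  set B : ℕ → Set Ω := fun m => {ω | ∀ k ≤ m, Y k ω ≠ 0 ∧ Y k ω < M}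
  have hB : ∀ m, MeasurableSet[gwFiltration hGW.1 m] (B m) := fun m => by
    simp only [B, Set.ofPred_forall]
    exact MeasurableSet.iInter fun k => MeasurableSet.iInter fun hk =>
      (hGW.adapted h0).measurable_le hk (Set.to_countable {j | j ≠ 0 ∧ j < M}).measurableSet
  have hdecay : ∀ m, P (B m) ≤ r ^ m := by
    intro m
    induction m with
    | zero => simpa using prob_le_one
    | succ m ih =>
      calc P (B (m + 1)) ≤ P (B m ∩ {ω | Y (m + 1) ω ≠ 0}) :=
            measure_mono fun ω hω => ⟨fun k hk => hω k (hk.trans m.le_succ), (hω _ le_rfl).1⟩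
        _ ≤ r * P (B m) :=
            hGW.measure_inter_Y_succ_ne_zero_le h0 (hB m) fun ω hω => (hω m le_rfl).2
        _ ≤ r ^ (m + 1) := by rw [pow_succ']; gcongr
  refine le_antisymm (ge_of_tendsto (ENNReal.tendsto_pow_atTop_nhds_zero_of_lt_one hr)
    (Eventually.of_forall fun m => ?_)) zero_le
  exact le_trans (measure_mono (t := B m) fun ω hω k _ => hω k) (hdecay m)

end IsGW

/-- The critical Galton–Watson process dies out: if ν(0) > 0 and the mean of ν
is 1, the process started from one individual goes extinct almost surely. -/
theorem stmt17 {Ω : Type} [MeasurableSpace Ω] (P : Measure Ω) [IsProbabilityMeasure P]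
    (ν : Measure ℕ) [IsProbabilityMeasure ν] (hν0 : 0 < ν {0})
    (X : ℕ → ℕ → Ω → ℕ) (Y : ℕ → Ω → ℕ)
    (hGW : IsGW P ν X Y) (h0 : ∀ ω, Y 0 ω = 1)
    (hm : ∫⁻ x, (x : ℝ≥0∞) ∂ν = 1) :
    P {ω | ∀ k, Y k ω ≠ 0} = 0 := by
  have hstuck : ∀ᵐ ω ∂P, ∀ M, ¬ ∀ k, Y k ω ≠ 0 ∧ Y k ω < M := ae_all_iff.2 fun M =>
    measure_eq_zero_iff_ae_notMem.1 (hGW.measure_forall_Y_ne_zero_and_lt_eq_zero h0 hν0 M)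
  rw [measure_eq_zero_iff_ae_notMem]
  filter_upwards [hGW.ae_exists_forall_lt h0 hm, hstuck] with ω ⟨M, hM⟩ hω hsurvive
  exact hω M fun k => ⟨hsurvive k, hM k⟩
end
end

section
/- Let (X_i^n) be i.i.d. with law ν on ℕ and (B_i^n) i.i.d. Bernoulli(p) independent of the X's. Define Y_0 = Y_0^p = N, Y_{n+1} = Σ_{i≤Y_n} X_i^n, and Y_{n+1}^p = Σ_{i≤Y_n^p} B_i^n X_i^n. Then for any T, M, N: P(Y_T^p ≥ 2N) ≥ P(max_{0≤i≤T} Y_i ≤ M and Y_T ≥ 2N) · p^{T·M}. -/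
/-!
Let `E` be the event that every Bernoulli mark `B n i` with `n < T`, `i < M` equals `1`. On `E`,
as long as the original process stays below `M`, the thinned process keeps every offspring and
coincides with it up to time `T`. The event `E` has probability `p ^ (T * M)` and is independent of
the σ-algebra generated by the offspring numbers `X`, which contains the event
`{max_{i ≤ T} Y i ≤ M, 2N ≤ Y T}`.
-/

open MeasureTheory ProbabilityTheory ENNReal NNReal Finset

section
variable {Ω β : Type*} {mΩ : MeasurableSpace Ω}

theorem measurable_sum_range_of_measurable_index [AddCommMonoid β] [MeasurableSpace β]
    [MeasurableAdd₂ β] {K : Ω → ℕ} {Z : ℕ → Ω → β} (hK : Measurable K)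
    (hZ : ∀ i, Measurable (Z i)) : Measurable fun ω => ∑ i ∈ range (K ω), Z i ω := by
  have : Measurable fun q : Ω × ℕ => ∑ i ∈ range q.2, Z i q.1 :=
    measurable_from_prod_countable_left fun k => Finset.measurable_sum (range k) fun i _ => hZ i
  exact this.comp (measurable_id.prodMk hK)

theorem measurable_galtonWatson {Y : ℕ → Ω → ℕ} {X : ℕ → ℕ → Ω → ℕ}
    (hX : ∀ n i, Measurable (X n i)) (hY0 : Measurable (Y 0))
    (hY : ∀ n ω, Y (n + 1) ω = ∑ i ∈ range (Y n ω), X n i ω) : ∀ n, Measurable (Y n)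
  | 0 => hY0
  | n + 1 => by
    rw [funext (hY n)]
    exact measurable_sum_range_of_measurable_index (measurable_galtonWatson hX hY0 hY n) (hX n)

theorem ProbabilityTheory.iIndepFun.indep_iSup_comap_comp [MeasurableSpace β] {ι κ₁ κ₂ : Type*}
    {f : ι → Ω → β} {μ : Measure Ω} (hf : iIndepFun f μ) (hmeas : ∀ i, Measurable (f i))
    {g₁ : κ₁ → ι} {g₂ : κ₂ → ι} (hg : Disjoint (Set.range g₁) (Set.range g₂)) :
    Indep (⨆ k, MeasurableSpace.comap (f (g₁ k)) inferInstance)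
      (⨆ k, MeasurableSpace.comap (f (g₂ k)) inferInstance) μ := by
  simpa only [iSup_range] using indep_iSup_of_disjoint (fun i => (hmeas i).comap_le) hf.iIndep hg

theorem ProbabilityTheory.iIndepFun.measure_biInter_preimage_eq_pow [MeasurableSpace β] {ι : Type*}
    {f : ι → Ω → β} {μ : Measure Ω} (hf : iIndepFun f μ) (s : Finset ι) {t : Set β}
    (ht : MeasurableSet t) {c : ℝ≥0∞} (hc : ∀ i ∈ s, μ (f i ⁻¹' t) = c) :
    μ (⋂ i ∈ s, f i ⁻¹' t) = c ^ #s := by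
  rw [hf.meas_biInter fun i _ => ⟨t, ht, rfl⟩, prod_congr rfl hc, prod_const]

end

theorem thinning_eq_of_forall_eq_one {y yp : ℕ → ℕ} {x b : ℕ → ℕ → ℕ} {T M : ℕ}
    (h0 : yp 0 = y 0) (hy : ∀ n, y (n + 1) = ∑ i ∈ range (y n), x n i)
    (hyp : ∀ n, yp (n + 1) = ∑ i ∈ range (yp n), b n i * x n i)
    (hyM : ∀ n < T, y n ≤ M) (hb : ∀ n < T, ∀ i < M, b n i = 1) :
    ∀ n ≤ T, yp n = y n
  | 0, _ => h0
  | n + 1, hn => by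
    rw [hyp, hy, thinning_eq_of_forall_eq_one h0 hy hyp hyM hb n (by omega)]
    refine sum_congr rfl fun i hi => ?_
    rw [hb n hn i ((mem_range.1 hi).trans_le (hyM n hn)), one_mul]

theorem stmt18_general {Ω : Type} [MeasurableSpace Ω] (P : Measure Ω) (p : ℝ≥0)
    (X B : ℕ → ℕ → Ω → ℕ)
    (hXmeas : ∀ n i, Measurable (X n i)) (hBmeas : ∀ n i, Measurable (B n i))
    (hindep : iIndepFun
      (fun q : Bool × ℕ × ℕ => if q.1 then B q.2.1 q.2.2 else X q.2.1 q.2.2) P)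
    (hBlaw : ∀ n i, P {ω | B n i ω = 1} = (p : ℝ≥0∞))
    (N : ℕ) (Y Yp : ℕ → Ω → ℕ)
    (hY0 : ∀ ω, Y 0 ω = N) (hYp0 : ∀ ω, Yp 0 ω = N)
    (hY : ∀ n ω, Y (n + 1) ω = ∑ i ∈ Finset.range (Y n ω), X n i ω)
    (hYp : ∀ n ω, Yp (n + 1) ω = ∑ i ∈ Finset.range (Yp n ω), B n i ω * X n i ω)
    (T M : ℕ) :
    P {ω | (∀ i ≤ T, Y i ω ≤ M) ∧ 2 * N ≤ Y T ω} * (p : ℝ≥0∞) ^ (T * M)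
      ≤ P {ω | 2 * N ≤ Yp T ω} := by
  set mX := ⨆ r : ℕ × ℕ, MeasurableSpace.comap (X r.1 r.2) inferInstance
  set mB := ⨆ r : ℕ × ℕ, MeasurableSpace.comap (B r.1 r.2) inferInstance
  have hXB : Indep mX mB P := by
    refine hindep.indep_iSup_comap_comp (g₁ := (false, ·)) (g₂ := (true, ·)) ?_ ?_
    · rintro ⟨_ | _, n, i⟩
      exacts [hXmeas n i, hBmeas n i]
    · simp [Set.disjoint_left]
  have hXm : ∀ n i, Measurable[mX] (X n i) := fun n i =>
    measurable_iff_comap_le.2 (le_iSup_of_le (n, i) le_rfl)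
  have hBm : ∀ n i, Measurable[mB] (B n i) := fun n i =>
    measurable_iff_comap_le.2 (le_iSup_of_le (n, i) le_rfl)
  have hYm : ∀ n, Measurable[mX] (Y n) :=
    measurable_galtonWatson hXm (by rw [funext hY0]; exact measurable_const) hY
  set A := {ω | (∀ i ≤ T, Y i ω ≤ M) ∧ 2 * N ≤ Y T ω}
  set E := ⋂ r ∈ Finset.range T ×ˢ Finset.range M, B r.1 r.2 ⁻¹' {1}
  have hA : MeasurableSet[mX] A := by
    simp only [A, Set.ofPred_and, Set.ofPred_forall]
    exact .inter (.iInter fun i => .iInter fun _ => measurableSet_le (hYm i) measurable_const)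
      (measurableSet_le measurable_const (hYm T))
  have hE : MeasurableSet[mB] E :=
    Finset.measurableSet_biInter _ fun r _ => hBm r.1 r.2 (measurableSet_singleton 1)
  have hPE : P E = (p : ℝ≥0∞) ^ (T * M) := by
    have hBindep : iIndepFun (fun r : ℕ × ℕ => B r.1 r.2) P :=
      hindep.precomp (g := fun r => (true, r)) fun _ _ h => by simpa using h
    rw [hBindep.measure_biInter_preimage_eq_pow _ (measurableSet_singleton 1)
      fun r _ => hBlaw r.1 r.2, card_product, card_range, card_range]
  calc P A * (p : ℝ≥0∞) ^ (T * M) = P (A ∩ E) := by rw [(Indep_iff _ _ P).1 hXB A E hA hE, hPE]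
    _ ≤ P {ω | 2 * N ≤ Yp T ω} := by
      refine measure_mono fun ω ⟨⟨hYM, hYT⟩, hB⟩ => ?_
      have hB1 : ∀ n < T, ∀ i < M, B n i ω = 1 := fun n hn i hi =>
        Set.mem_iInter₂.1 hB (n, i) (by simp [hn, hi])
      have hYpT := thinning_eq_of_forall_eq_one (y := (Y · ω)) (yp := (Yp · ω)) (x := (X · · ω))
        ((hYp0 ω).trans (hY0 ω).symm) (hY · ω) (hYp · ω) (fun n hn => hYM n hn.le) hB1 T le_rfl
      exact hYT.trans hYpT.ge

/-- Thinning inequality: if (Yᵖ) is the p-thinned Galton–Watson process, then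
P(Yᵖ_T ≥ 2N) ≥ P(max_{i≤T} Y_i ≤ M and Y_T ≥ 2N)·p^{T·M}. -/
theorem stmt18 {Ω : Type} [MeasurableSpace Ω] (P : Measure Ω) [IsProbabilityMeasure P]
    (ν : Measure ℕ) [IsProbabilityMeasure ν] (p : ℝ≥0) (hp : p ≤ 1)
    (X B : ℕ → ℕ → Ω → ℕ)
    (hXmeas : ∀ n i, Measurable (X n i)) (hBmeas : ∀ n i, Measurable (B n i))
    (hindep : iIndepFun
      (fun q : Bool × ℕ × ℕ => if q.1 then B q.2.1 q.2.2 else X q.2.1 q.2.2) P)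
    (hXlaw : ∀ n i, Measure.map (X n i) P = ν)
    (hB01 : ∀ n i ω, B n i ω ≤ 1)
    (hBlaw : ∀ n i, P {ω | B n i ω = 1} = (p : ℝ≥0∞))
    (N : ℕ) (Y Yp : ℕ → Ω → ℕ)
    (hY0 : ∀ ω, Y 0 ω = N) (hYp0 : ∀ ω, Yp 0 ω = N)
    (hY : ∀ n ω, Y (n + 1) ω = ∑ i ∈ Finset.range (Y n ω), X n i ω)
    (hYp : ∀ n ω, Yp (n + 1) ω = ∑ i ∈ Finset.range (Yp n ω), B n i ω * X n i ω)
    (T M : ℕ) :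
    P {ω | (∀ i ≤ T, Y i ω ≤ M) ∧ 2 * N ≤ Y T ω} * (p : ℝ≥0∞) ^ (T * M)
      ≤ P {ω | 2 * N ≤ Yp T ω} :=
  stmt18_general P p X B hXmeas hBmeas hindep hBlaw N Y Yp hY0 hYp0 hY hYp T M
end
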